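/- Let n ≥ 1 be an integer and a > 0 a real number. For any vector t ∈ ℝⁿ with t_i > 0 for all i and ∑_{i=1}^{n} t_i² = n·a², one has ∏_{i=1}^{n} Φ(t_i) ≤ Φ(a)ⁿ, and equality holds if and only if t_i = a for all i. -/

import Mathlib

/-!
Substituting `x = t²`, the inequality is Jensen's inequality for `g(x) = log Φ(√x)`, which
is strictly concave on `(0, ∞)`: its derivative `φ(√x) / (2√x Φ(√x))` has a strictly
decreasing numerator and an increasing positive denominator. Strict concavity gives the
equality case.
-/

open scoped BigOperators

/-- The standard normal cumulative distribution function
`Φ(t) = ∫_{−∞}^{t} (1/√(2π)) e^{−τ²/2} dτ`. -/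
noncomputable def stdNormalCDF (t : ℝ) : ℝ :=
  ∫ τ in Set.Iic t, (Real.sqrt (2 * Real.pi))⁻¹ * Real.exp (-τ ^ 2 / 2)

open MeasureTheory ProbabilityTheory Real Set Finset

section Jensen

variable {s : Set ℝ} {g : ℝ → ℝ} {ι : Type*} [Fintype ι] {p : ι → ℝ} {m : ℝ}

theorem sum_inv_card_smul_eq_of_sum_eq [Nonempty ι] (hm : ∑ i, p i = Fintype.card ι * m) :
    ∑ i, (Fintype.card ι : ℝ)⁻¹ • p i = m := by
  rw [← smul_sum, hm, smul_eq_mul, inv_mul_cancel_left₀ (by positivity)]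

theorem ConcaveOn.sum_le_card_mul_of_sum_eq (hg : ConcaveOn ℝ s g) (hp : ∀ i, p i ∈ s)
    (hm : ∑ i, p i = Fintype.card ι * m) : ∑ i, g (p i) ≤ Fintype.card ι * g m := by
  rcases isEmpty_or_nonempty ι with hι | hι
  · simp
  have hN : (0 : ℝ) < Fintype.card ι := by positivity
  have := hg.le_map_sum (t := univ) (w := fun _ => (Fintype.card ι : ℝ)⁻¹)
    (fun _ _ => by positivity) (by simp) (fun i _ => hp i)
  rwa [sum_inv_card_smul_eq_of_sum_eq hm, ← smul_sum, inv_smul_le_iff_of_pos hN,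
    smul_eq_mul] at this

theorem StrictConcaveOn.sum_eq_card_mul_iff_of_sum_eq (hg : StrictConcaveOn ℝ s g)
    (hp : ∀ i, p i ∈ s) (hm : ∑ i, p i = Fintype.card ι * m) :
    ∑ i, g (p i) = Fintype.card ι * g m ↔ ∀ i, p i = m := by
  rcases isEmpty_or_nonempty ι with hι | hι
  · simp
  have hN : (0 : ℝ) < Fintype.card ι := by positivity
  have := hg.map_sum_eq_iff (t := univ) (w := fun _ => (Fintype.card ι : ℝ)⁻¹)
    (fun _ _ => by positivity) (by simp) (fun i _ => hp i)
  rw [sum_inv_card_smul_eq_of_sum_eq hm, ← smul_sum, smul_eq_mul,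
    eq_inv_mul_iff_mul_eq₀ hN.ne'] at this
  simpa [eq_comm, mul_comm] using this

theorem prod_le_pow_card_and_eq_iff_of_strictConcaveOn_log {F : ℝ → ℝ} (hF : ∀ x, 0 < F x)
    (hlogF : StrictConcaveOn ℝ s (fun x => log (F x))) (hp : ∀ i, p i ∈ s)
    (hm : ∑ i, p i = Fintype.card ι * m) :
    ∏ i, F (p i) ≤ F m ^ Fintype.card ι ∧
      (∏ i, F (p i) = F m ^ Fintype.card ι ↔ ∀ i, p i = m) := by
  have hprod : ∏ i, F (p i) = exp (∑ i, log (F (p i))) := by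
    simp [exp_sum, exp_log (hF _)]
  have hpow : F m ^ Fintype.card ι = exp (Fintype.card ι * log (F m)) := by
    rw [exp_nat_mul, exp_log (hF m)]
  rw [hprod, hpow, exp_le_exp, exp_eq_exp]
  exact ⟨hlogF.concaveOn.sum_le_card_mul_of_sum_eq hp hm,
    hlogF.sum_eq_card_mul_iff_of_sum_eq hp hm⟩

end Jensen

theorem continuous_gaussianPDFReal (μ : ℝ) (v : NNReal) : Continuous (gaussianPDFReal μ v) := by
  unfold gaussianPDFReal
  fun_prop

theorem strictAntiOn_gaussianPDFReal (μ : ℝ) {v : NNReal} (hv : v ≠ 0) :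
    StrictAntiOn (gaussianPDFReal μ v) (Ici μ) := by
  intro x hx y _ hxy
  have hv' : (0 : ℝ) < v := by positivity
  unfold gaussianPDFReal
  gcongr
  exact sub_nonneg.2 hx

theorem stdNormalCDF_eq_integral_gaussianPDFReal (t : ℝ) :
    stdNormalCDF t = ∫ τ in Iic t, gaussianPDFReal 0 1 τ := by
  simp [stdNormalCDF, gaussianPDFReal]

theorem stdNormalCDF_pos (t : ℝ) : 0 < stdNormalCDF t := by
  rw [stdNormalCDF_eq_integral_gaussianPDFReal, setIntegral_pos_iff_support_of_nonneg_ae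
    (.of_forall (gaussianPDFReal_nonneg 0 1)) (integrable_gaussianPDFReal 0 1).integrableOn,
    Function.support_eq_univ fun x => (gaussianPDFReal_pos 0 1 x one_ne_zero).ne', univ_inter]
  simp

theorem hasDerivAt_stdNormalCDF (t : ℝ) :
    HasDerivAt stdNormalCDF (gaussianPDFReal 0 1 t) t := by
  have hφ := integrable_gaussianPDFReal 0 1
  have hsplit :
      ∀ u, stdNormalCDF u = stdNormalCDF 0 + ∫ τ in (0 : ℝ)..u, gaussianPDFReal 0 1 τ := by
    intro u
    rw [stdNormalCDF_eq_integral_gaussianPDFReal, stdNormalCDF_eq_integral_gaussianPDFReal,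
      ← intervalIntegral.integral_Iic_sub_Iic hφ.integrableOn hφ.integrableOn, add_sub_cancel]
  rw [funext hsplit]
  exact (intervalIntegral.integral_hasDerivAt_right hφ.intervalIntegrable
    ((continuous_gaussianPDFReal 0 1).stronglyMeasurableAtFilter _ _)
    (continuous_gaussianPDFReal 0 1).continuousAt).const_add _

theorem monotone_stdNormalCDF : Monotone stdNormalCDF :=
  monotone_of_hasDerivAt_nonneg hasDerivAt_stdNormalCDF (gaussianPDFReal_nonneg 0 1)

theorem hasDerivAt_log_stdNormalCDF_sqrt {x : ℝ} (hx : 0 < x) :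
    HasDerivAt (fun y => log (stdNormalCDF √y))
      (gaussianPDFReal 0 1 √x / (2 * √x * stdNormalCDF √x)) x := by
  have hΦ :
      HasDerivAt (fun y => stdNormalCDF √y) (gaussianPDFReal 0 1 √x * (1 / (2 * √x))) x :=
    (hasDerivAt_stdNormalCDF √x).comp x (hasDerivAt_sqrt hx.ne')
  convert hΦ.log (stdNormalCDF_pos √x).ne' using 1
  ring

theorem strictConcaveOn_log_stdNormalCDF_sqrt :
    StrictConcaveOn ℝ (Ioi 0) (fun x => log (stdNormalCDF √x)) := by
  refine StrictAntiOn.strictConcaveOn_of_deriv (convex_Ioi 0)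
    (fun x hx => (hasDerivAt_log_stdNormalCDF_sqrt hx).continuousAt.continuousWithinAt) ?_
  rw [interior_Ioi]
  intro x hx y hy hxy
  rw [(hasDerivAt_log_stdNormalCDF_sqrt hx).deriv, (hasDerivAt_log_stdNormalCDF_sqrt hy).deriv]
  have hsx : 0 < √x := sqrt_pos.2 hx
  have hsxy : √x < √y := sqrt_lt_sqrt hx.le hxy
  have hΦ := stdNormalCDF_pos √x
  refine div_lt_div₀ (strictAntiOn_gaussianPDFReal 0 one_ne_zero hsx.le (hsx.trans hsxy).le hsxy)
    ?_ (gaussianPDFReal_nonneg 0 1 _) (by positivity)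
  gcongr
  exact monotone_stdNormalCDF hsxy.le

theorem prod_stdNormalCDF_le_of_sum_sq_eq_general (n : ℕ) (a : ℝ) (ha : 0 < a)
    (t : Fin n → ℝ) (htpos : ∀ i, 0 < t i) (ht : ∑ i, (t i) ^ 2 = n * a ^ 2) :
    (∏ i, stdNormalCDF (t i) ≤ (stdNormalCDF a) ^ n) ∧
      ((∏ i, stdNormalCDF (t i) = (stdNormalCDF a) ^ n) ↔ ∀ i, t i = a) := by
  obtain ⟨hle, heq⟩ := prod_le_pow_card_and_eq_iff_of_strictConcaveOn_log
    (fun x => stdNormalCDF_pos √x) strictConcaveOn_log_stdNormalCDF_sqrt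
    (p := fun i => t i ^ 2) (m := a ^ 2) (fun i => pow_pos (htpos i) 2) (by simpa using ht)
  simp only [fun i => sqrt_sq (htpos i).le, sqrt_sq ha.le, Fintype.card_fin] at hle heq
  exact ⟨hle, heq.trans (forall_congr' fun i => sq_eq_sq₀ (htpos i).le ha.le)⟩

/-- For `n ≥ 1`, `a > 0` and `t ∈ ℝⁿ` with `tᵢ > 0` for all `i` and `∑ tᵢ² = n·a²`,
one has `∏ Φ(tᵢ) ≤ Φ(a)ⁿ`, with equality iff `tᵢ = a` for all `i`. -/
theorem prod_stdNormalCDF_le_of_sum_sq_eq (n : ℕ) (hn : 1 ≤ n) (a : ℝ) (ha : 0 < a)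
    (t : Fin n → ℝ) (htpos : ∀ i, 0 < t i) (ht : ∑ i, (t i) ^ 2 = n * a ^ 2) :
    (∏ i, stdNormalCDF (t i) ≤ (stdNormalCDF a) ^ n) ∧
      ((∏ i, stdNormalCDF (t i) = (stdNormalCDF a) ^ n) ↔ ∀ i, t i = a) :=
  prod_stdNormalCDF_le_of_sum_sq_eq_general n a ha t htpos ht
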